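/- Let λ₁, …, λ_S > 0, σ² > 0, p₀ > 0, and for each s set p_s = max(0, 1/p₀ − σ²/λ_s²). Let S̄ = #{s : p_s = 0}. Then Σ_{s=1}^{S} log₂(1 + (p_s/σ²)·λ_s²) ≤ S·log₂( (1/(S·p₀·σ²))·Σ_{s=1}^{S} λ_s² + S̄/S ). -/

import Mathlib

/-!
With channel gain `g_s = λ_s² / σ²` and water level `w = 1 / p₀`, the water-filling power is
`p_s = max 0 (w - g_s⁻¹)`, so stream `s` carries `log (1 + p_s g_s) = log (max 1 (w g_s))`, and
`max 1 (w g_s) ≤ w g_s + [p_s = 0]`. Summing, the arithmetic mean of the `max 1 (w g_s)` is at most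
the argument `R` of the logarithm on the right-hand side, and the tangent-line bound
`log x ≤ log R + x / R - 1` (concavity of `log`) turns this into `∑ log x_s ≤ S log R`.
-/

open Finset

theorem one_add_max_sub_inv_mul {w g : ℝ} (hg : 0 < g) :
    1 + max 0 (w - g⁻¹) * g = max 1 (w * g) := by
  rw [max_mul_of_nonneg _ _ hg.le, zero_mul, sub_mul, inv_mul_cancel₀ hg.ne', ← max_add_add_left]
  simp

theorem max_one_mul_le_add_ite {w g : ℝ} (hw : 0 ≤ w) (hg : 0 < g) :
    max 1 (w * g) ≤ w * g + if max 0 (w - g⁻¹) = 0 then 1 else 0 := by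
  split_ifs with h
  · exact max_le (by linarith [mul_nonneg hw hg.le]) (by linarith)
  · have : 1 < w * g := by
      rw [← inv_mul_cancel₀ hg.ne']
      exact mul_lt_mul_of_pos_right (by simpa using h) hg
    simp [this.le]

theorem Finset.sum_log_le_card_mul_log {ι : Type*} {s : Finset ι} {x : ι → ℝ} {R : ℝ}
    (hx : ∀ i ∈ s, 0 < x i) (hR : 0 < R) (hsum : ∑ i ∈ s, x i ≤ #s * R) :
    ∑ i ∈ s, Real.log (x i) ≤ #s * Real.log R := by
  have htangent : ∀ i ∈ s, Real.log (x i) ≤ Real.log R + (x i / R - 1) := fun i hi => by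
    have := Real.log_le_sub_one_of_pos (div_pos (hx i hi) hR)
    rw [Real.log_div (hx i hi).ne' hR.ne'] at this
    linarith
  calc ∑ i ∈ s, Real.log (x i) ≤ ∑ i ∈ s, (Real.log R + (x i / R - 1)) := sum_le_sum htangent
    _ = #s * Real.log R + ((∑ i ∈ s, x i) / R - #s) := by
      rw [sum_add_distrib, sum_sub_distrib, ← sum_div]; simp
    _ ≤ #s * Real.log R := by
      have : (∑ i ∈ s, x i) / R ≤ #s := by rwa [div_le_iff₀ hR]
      linarith

theorem Finset.sum_logb_le_card_mul_logb {ι : Type*} {s : Finset ι} {x : ι → ℝ} {b R : ℝ}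
    (hb : 1 < b) (hx : ∀ i ∈ s, 0 < x i) (hR : 0 < R) (hsum : ∑ i ∈ s, x i ≤ #s * R) :
    ∑ i ∈ s, Real.logb b (x i) ≤ #s * Real.logb b R := by
  simp only [Real.logb, ← sum_div, ← mul_div_assoc]
  gcongr
  · exact (Real.log_pos hb).le
  · exact sum_log_le_card_mul_log hx hR hsum

theorem stmt_10 (S : ℕ) (hS : 0 < S) (lam : Fin S → ℝ) (hlam : ∀ s, 0 < lam s)
    (σ2 p0 : ℝ) (hσ2 : 0 < σ2) (hp0 : 0 < p0)
    (p : Fin S → ℝ) (hp : ∀ s, p s = max 0 (1 / p0 - σ2 / lam s ^ 2))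
    (Sbar : ℕ) (hSbar : Sbar = (Finset.univ.filter fun s => p s = 0).card) :
    ∑ s, Real.logb 2 (1 + (p s / σ2) * lam s ^ 2) ≤
      S * Real.logb 2 ((1 / (S * p0 * σ2)) * ∑ s, lam s ^ 2 + (Sbar : ℝ) / S) := by
  set g : Fin S → ℝ := fun s => lam s ^ 2 / σ2
  have hg : ∀ s, 0 < g s := fun s => by have := hlam s; positivity
  have hpg : ∀ s, p s = max 0 (1 / p0 - (g s)⁻¹) := fun s => by rw [hp s, inv_div]
  have hrate : ∀ s, 1 + p s / σ2 * lam s ^ 2 = max 1 (1 / p0 * g s) := fun s => by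
    rw [← one_add_max_sub_inv_mul (hg s), ← hpg s, div_mul_eq_mul_div, mul_div_assoc]
  set R := (1 / (S * p0 * σ2)) * ∑ s, lam s ^ 2 + (Sbar : ℝ) / S
  have hsum : ∑ s, max 1 (1 / p0 * g s) ≤ S * R := calc
    _ ≤ ∑ s, (1 / p0 * g s + if p s = 0 then 1 else 0) := sum_le_sum fun s _ => by
      rw [hpg s]; exact max_one_mul_le_add_ite (by positivity) (hg s)
    _ = S * R := by
      have hS' : (S : ℝ) ≠ 0 := by positivity
      rw [sum_add_distrib, sum_boole, ← hSbar, ← mul_sum, ← sum_div]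
      simp only [R]
      field_simp
  have hR : 0 < R := by
    refine pos_of_mul_pos_right (lt_of_lt_of_le ?_ hsum) (Nat.cast_nonneg S)
    exact sum_pos (fun s _ => lt_max_of_lt_left one_pos) (univ_nonempty_iff.2 ⟨⟨0, hS⟩⟩)
  simp only [hrate]
  have hlog := sum_logb_le_card_mul_logb (s := univ) one_lt_two
    (fun s _ => lt_max_of_lt_left one_pos) hR (by rwa [card_fin])
  rwa [card_fin] at hlog
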